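/- arXiv:2108.01524 — 3 statements merged into one kernel-verified Lean document; each statement's English description precedes it below -/
import Mathlib

section
/- The tropical hyperfield T is algebraically closed: every univariate polynomial over T of degree at least 1 (with at least two monomial terms, or allowing root -∞) has a root in T. -/
open Set
open scoped Classical

/-- The axioms of a (Krasner) hyperfield on a carrier `H`, for a multivalued
addition `add`, multiplication `mul`, additive inverse `neg`, and constants. -/
structure IsHyperfield {H : Type*} (add : H → H → Set H) (mul : H → H → H)
    (neg : H → H) (zero one : H) : Prop where
  add_nonempty : ∀ x y, (add x y).Nonempty
  hadd_comm : ∀ x y, add x y = add y x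
  hadd_assoc : ∀ x y z, (⋃ w ∈ add x y, add w z) = ⋃ w ∈ add y z, add x w
  zero_hadd : ∀ x, add zero x = {x}
  hneg_add : ∀ x, zero ∈ add x (neg x)
  hneg_unique : ∀ x y, zero ∈ add x y → y = neg x
  reversible : ∀ x y z, x ∈ add y z → z ∈ add x (neg y)
  hmul_comm : ∀ x y, mul x y = mul y x
  hmul_assoc : ∀ x y z, mul (mul x y) z = mul x (mul y z)
  one_hmul : ∀ x, mul one x = x
  zero_hmul : ∀ x, mul zero x = zero
  hdistrib : ∀ a x y, (mul a) '' (add x y) = add (mul a x) (mul a y)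
  zero_ne_one : zero ≠ one
  exists_inv : ∀ x, x ≠ zero → ∃ y, mul x y = one

/-- Multivalued hypersum of a list of elements. -/
def hsum {H : Type*} (add : H → H → Set H) (zero : H) : List H → Set H
  | [] => {zero}
  | a :: l => ⋃ b ∈ hsum add zero l, add a b

/-- Powers with respect to a monoid multiplication. -/
def hpow {H : Type*} (mul : H → H → H) (one : H) (a : H) : ℕ → H
  | 0 => one
  | n + 1 => mul a (hpow mul one a n)

/-- Multivalued evaluation of the univariate polynomial `⊞_{i=0}^n c_i ⊙ X^i` at `a`. -/
def evalPoly {H : Type*} (add : H → H → Set H) (mul : H → H → H) (zero one : H)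
    (n : ℕ) (c : ℕ → H) (a : H) : Set H :=
  hsum add zero ((List.range (n + 1)).map fun i => mul (c i) (hpow mul one a i))

/-- Multivalued evaluation of a multivariate polynomial given by a list of
terms (coefficient, exponent vector) at a point `x`. -/
def evalMPoly {H : Type*} (add : H → H → Set H) (mul : H → H → H) (zero one : H)
    {n : ℕ} (terms : List (H × (Fin n → ℕ))) (x : Fin n → H) : Set H :=
  hsum add zero (terms.map fun t =>
    mul t.1 ((List.ofFn fun j => hpow mul one (x j) (t.2 j)).foldr mul one))

/-- Hyperfield homomorphism axioms. -/
structure IsHyperfieldHom {H1 H2 : Type*}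
    (add1 : H1 → H1 → Set H1) (mul1 : H1 → H1 → H1) (zero1 one1 : H1)
    (add2 : H2 → H2 → Set H2) (mul2 : H2 → H2 → H2) (zero2 one2 : H2)
    (f : H1 → H2) : Prop where
  map_zero : f zero1 = zero2
  map_one : f one1 = one2
  map_mul : ∀ x y, f (mul1 x y) = mul2 (f x) (f y)
  map_add : ∀ x y, f '' (add1 x y) ⊆ add2 (f x) (f y)

/-- `f` is relatively algebraically closed: every root of the coefficientwise
push-forward of a univariate polynomial lifts through `f` to a root. -/
def IsRAC {H1 H2 : Type*}
    (add1 : H1 → H1 → Set H1) (mul1 : H1 → H1 → H1) (zero1 one1 : H1)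
    (add2 : H2 → H2 → Set H2) (mul2 : H2 → H2 → H2) (zero2 one2 : H2)
    (f : H1 → H2) : Prop :=
  ∀ (n : ℕ) (c : ℕ → H1) (b : H2),
    zero2 ∈ evalPoly add2 mul2 zero2 one2 n (fun i => f (c i)) b →
    ∃ a : H1, f a = b ∧ zero1 ∈ evalPoly add1 mul1 zero1 one1 n c a

/-- Tropical hyperaddition on `ℝ ∪ {-∞}`. -/
noncomputable def Tadd (x y : WithBot ℝ) : Set (WithBot ℝ) :=
  if x = y then {z | z ≤ x} else {max x y}

/-- Tropical multiplication: addition of extended reals. -/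
noncomputable def Tmul (x y : WithBot ℝ) : WithBot ℝ := x + y

/-- Hyperaddition of the tropical complex hyperfield `TC` on `ℂ`. -/
noncomputable def TCadd (z w : ℂ) : Set ℂ :=
  if w = -z then {c | ‖c‖ ≤ ‖z‖}
  else if ‖w‖ < ‖z‖ then {z}
  else if ‖z‖ < ‖w‖ then {w}
  else {c | ∃ t : ℝ, 0 ≤ t ∧ t ≤ 1 ∧
    c = ((‖z‖ / ‖(t : ℂ) * z + (1 - (t : ℂ)) * w‖ : ℝ) : ℂ) *
      ((t : ℂ) * z + (1 - (t : ℂ)) * w)}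

/-- The homomorphism `η(z) = log |z|` from `TC` to the tropical hyperfield. -/
noncomputable def eta (z : ℂ) : WithBot ℝ :=
  if z = 0 then ⊥ else ((Real.log (‖z‖) : ℝ) : WithBot ℝ)

/-- Hyperaddition of the hyperfield of signs. -/
noncomputable def Sadd (x y : SignType) : Set SignType :=
  if x = 0 then {y} else if y = 0 then {x} else if x = y then {x} else Set.univ

/-- Hyperaddition of the Krasner hyperfield on `Bool` (`false = 0`, `true = 1`). -/
def Kadd (x y : Bool) : Set Bool :=
  if x = false then {y} else if y = false then {x} else Set.univ

/-- `c ∈ (X ⊞ -a) ⊙ d` : the coefficients `c` arise from multiplying the linear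
factor `X ⊞ (-a)` with the polynomial with coefficients `d`. -/
def LinFactor {H : Type*} (add : H → H → Set H) (mul : H → H → H) (zero : H)
    (neg : H → H) (a : H) (c d : ℕ → H) : Prop :=
  ∀ i, c i ∈ add (if i = 0 then zero else d (i - 1)) (mul (neg a) (d i))

/-- `MultGe … a n c k` : the multiplicity of `a` as a root of the degree-`n`
polynomial with coefficients `c` is at least `k` (recursive peeling of linear factors). -/
def MultGe {H : Type*} (add : H → H → Set H) (mul : H → H → H) (zero one : H)
    (neg : H → H) (a : H) : ℕ → (ℕ → H) → ℕ → Prop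
  | _, _, 0 => True
  | n, c, k + 1 => zero ∈ evalPoly add mul zero one n c a ∧
      ∃ d : ℕ → H, (∀ i, n ≤ i → d i = zero) ∧ LinFactor add mul zero neg a c d ∧
        MultGe add mul zero one neg a (n - 1) d k

/-- The multiplicity of `a` as a root. -/
noncomputable def hmult {H : Type*} (add : H → H → Set H) (mul : H → H → H)
    (zero one : H) (neg : H → H) (n : ℕ) (c : ℕ → H) (a : H) : ℕ :=
  sSup {k | MultGe add mul zero one neg a n c k}

/-- The multiplicity bound: the sum of root multiplicities is at most the degree. -/
def MultBound {H : Type*} (add : H → H → Set H) (mul : H → H → H)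
    (zero one : H) (neg : H → H) : Prop :=
  ∀ (n : ℕ) (c : ℕ → H), c n ≠ zero →
    ∀ S : Finset H, (S.sum fun a => hmult add mul zero one neg n c a) ≤ n

/-- The multiplicity equality: the sum of root multiplicities equals the degree. -/
def MultEq {H : Type*} (add : H → H → Set H) (mul : H → H → H)
    (zero one : H) (neg : H → H) : Prop :=
  MultBound add mul zero one neg ∧
    ∀ (n : ℕ) (c : ℕ → H), c n ≠ zero →
      ∃ S : Finset H, (S.sum fun a => hmult add mul zero one neg n c a) = n

/-- Iterated splitting off of a list of linear factors: `c ∈ (X ⊞ -a₁) ⊙ ⋯ ⊙ (X ⊞ -aₘ) ⊙ d`. -/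
def MultiLinFactor {H : Type*} (add : H → H → Set H) (mul : H → H → H) (zero : H)
    (neg : H → H) : List H → (ℕ → H) → (ℕ → H) → Prop
  | [], c, d => c = d
  | a :: l, c, d => ∃ e : ℕ → H, LinFactor add mul zero neg a c e ∧
      MultiLinFactor add mul zero neg l e d

/-- The inheritance property: any sub-multiset of the multiset of roots (with
multiplicity) of size at most the degree can be split off as linear factors. -/
def Inheritance {H : Type*} (add : H → H → Set H) (mul : H → H → H)
    (zero one : H) (neg : H → H) : Prop :=
  ∀ (n : ℕ) (c : ℕ → H), c n ≠ zero →
    ∀ l : List H, l.length ≤ n →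
      (∀ a : H, (l.filter fun x => x = a).length ≤ hmult add mul zero one neg n c a) →
      ∃ q : ℕ → H, MultiLinFactor add mul zero neg l c q

/-!
A polynomial `⊞ cᵢ ⊙ Xⁱ` over `T` evaluated at `a` is the hypersum of the values `cᵢ + i·a`,
and this hypersum contains `-∞` as soon as its maximum is attained twice. If `c₀ = -∞`, the
point `a = -∞` makes every term `-∞`. Otherwise the slope
`a = min {(c₀ - cₖ) / k | 1 ≤ k ≤ n, cₖ ≠ -∞}` (defined because `cₙ ≠ -∞`) makes `c₀` the
largest value, attained again at the minimizing `k`.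
-/

lemma max_mem_Tadd (x y : WithBot ℝ) : max x y ∈ Tadd x y := by
  unfold Tadd
  split_ifs with h
  · simp [h]
  · rfl

lemma foldr_max_mem_hsum_Tadd (L : List (WithBot ℝ)) : L.foldr max ⊥ ∈ hsum Tadd ⊥ L := by
  induction L with
  | nil => rfl
  | cons a l ih => exact Set.mem_biUnion ih (max_mem_Tadd _ _)

lemma Iic_subset_hsum_Tadd {L : List (WithBot ℝ)} {m : WithBot ℝ} (hdup : L.Duplicate m)
    (hle : ∀ x ∈ L, x ≤ m) : Iic m ⊆ hsum Tadd ⊥ L := by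
  induction hdup with
  | @cons_mem l hm =>
    have hmax : l.foldr max ⊥ = m :=
      le_antisymm (List.max_le_of_forall_le l m fun x hx => hle x (List.mem_cons_of_mem _ hx))
        (List.le_max_of_le hm le_rfl)
    intro z hz
    refine Set.mem_biUnion (foldr_max_mem_hsum_Tadd l) ?_
    simpa [Tadd, hmax] using hz
  | @cons_duplicate y l _ ih =>
    have ih := ih fun x hx => hle x (List.mem_cons_of_mem _ hx)
    have hy : y ≤ m := hle y List.mem_cons_self
    intro z hz
    by_cases hzy : z ≤ y
    · exact Set.mem_biUnion (ih hy) (by simpa [Tadd] using hzy)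
    · refine Set.mem_biUnion (ih hz) ?_
      have hyz : y ≠ z := fun h => hzy h.ge
      simp [Tadd, hyz, (not_le.mp hzy).le]

lemma hpow_Tmul (a : WithBot ℝ) (i : ℕ) : hpow Tmul 0 a i = i • a := by
  induction i with
  | zero => simp [hpow]
  | succ k ih => rw [hpow, ih, succ_nsmul', Tmul]

lemma nsmul_bot_of_pos {i : ℕ} (hi : 0 < i) : i • (⊥ : WithBot ℝ) = ⊥ := by
  obtain ⟨k, rfl⟩ := Nat.exists_eq_add_of_lt hi
  rw [succ_nsmul, WithBot.add_bot]

lemma bot_mem_evalPoly_T_of_le_coeff_zero {n j : ℕ} {c : ℕ → WithBot ℝ} {a : WithBot ℝ}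
    (hj0 : 0 < j) (hjn : j ≤ n) (hle : ∀ i ≤ n, c i + i • a ≤ c 0) (hj : c j + j • a = c 0) :
    (⊥ : WithBot ℝ) ∈ evalPoly Tadd Tmul ⊥ 0 n c a := by
  set f : ℕ → WithBot ℝ := fun i => c i + i • a
  have hf0 : f 0 = c 0 := by simp [f]
  have hfj : (f ∘ Nat.succ) (j - 1) = c 0 := by
    rw [Function.comp_apply, Nat.succ_eq_add_one, Nat.sub_add_cancel hj0]
    exact hj
  have hdup : ((List.range (n + 1)).map f).Duplicate (c 0) := by
    rw [List.range_succ_eq_map, List.map_cons, List.map_map, hf0]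
    exact .cons_mem (List.mem_map.mpr ⟨j - 1, List.mem_range.mpr (by omega), hfj⟩)
  have hbound : ∀ x ∈ (List.range (n + 1)).map f, x ≤ c 0 := by
    simp only [List.mem_map, List.mem_range]
    rintro _ ⟨i, hi, rfl⟩
    exact hle i (by omega)
  unfold evalPoly
  simp only [Tmul, hpow_Tmul]
  exact Iic_subset_hsum_Tadd hdup hbound (Set.mem_Iic.mpr bot_le)

lemma bot_mem_evalPoly_T_at_bot {n : ℕ} (hn : 1 ≤ n) {c : ℕ → WithBot ℝ} (hc0 : c 0 = ⊥) :
    (⊥ : WithBot ℝ) ∈ evalPoly Tadd Tmul ⊥ 0 n c ⊥ := by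
  refine bot_mem_evalPoly_T_of_le_coeff_zero hn le_rfl (fun i _ => ?_) ?_
  · rcases Nat.eq_zero_or_pos i with rfl | hi
    · simp
    · simp [nsmul_bot_of_pos hi]
  · rw [nsmul_bot_of_pos hn, WithBot.add_bot, hc0]

lemma exists_real_bot_mem_evalPoly_T {n : ℕ} (hn : 1 ≤ n) {c : ℕ → WithBot ℝ} (hc : c n ≠ ⊥)
    {c₀ : ℝ} (hc0 : c 0 = c₀) :
    ∃ r : ℝ, (⊥ : WithBot ℝ) ∈ evalPoly Tadd Tmul ⊥ 0 n c r := by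
  set S := (Finset.Icc 1 n).filter fun k => c k ≠ ⊥
  have hmemS {i : ℕ} : i ∈ S ↔ (1 ≤ i ∧ i ≤ n) ∧ c i ≠ ⊥ := by simp [S]
  have hS : S.Nonempty := ⟨n, hmemS.mpr ⟨⟨hn, le_rfl⟩, hc⟩⟩
  set slope : ℕ → ℝ := fun k => (c₀ - (c k).unbotD 0) / k
  obtain ⟨j, hjS, hj⟩ := S.exists_mem_eq_inf' hS slope
  set r := S.inf' hS slope
  have hterm : ∀ i ∈ S, ∃ cᵢ : ℝ, 0 < (i : ℝ) ∧ c i + i • (r : WithBot ℝ) = ↑(cᵢ + i * r) ∧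
      slope i = (c₀ - cᵢ) / i := by
    intro i hi
    obtain ⟨⟨hi, -⟩, hci⟩ := hmemS.mp hi
    obtain ⟨cᵢ, hcᵢ⟩ := WithBot.ne_bot_iff_exists.mp hci
    refine ⟨cᵢ, by exact_mod_cast hi, ?_, by simp [slope, ← hcᵢ]⟩
    rw [← hcᵢ, ← WithBot.coe_nsmul, ← WithBot.coe_add, nsmul_eq_mul]
  obtain ⟨⟨hj1, hjn⟩, -⟩ := hmemS.mp hjS
  refine ⟨r, bot_mem_evalPoly_T_of_le_coeff_zero hj1 hjn (fun i hin => ?_) ?_⟩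
  · by_cases hiS : i ∈ S
    · obtain ⟨cᵢ, hi, hval, hslope⟩ := hterm i hiS
      have hr : r ≤ (c₀ - cᵢ) / i := hslope ▸ S.inf'_le slope hiS
      rw [hval, hc0, WithBot.coe_le_coe]
      rw [le_div_iff₀ hi] at hr
      linarith
    · rcases Nat.eq_zero_or_pos i with rfl | hi
      · simp
      · have hci : c i = ⊥ := by
          by_contra hci
          exact hiS (hmemS.mpr ⟨⟨hi, hin⟩, hci⟩)
        simp [hci]
  · obtain ⟨cⱼ, hj0, hval, hslope⟩ := hterm j hjS
    rw [hval, hc0, WithBot.coe_inj, hj, hslope]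
    field_simp
    ring

/-- The tropical hyperfield `T` is algebraically closed:
every univariate polynomial of degree at least 1 has a root. -/
theorem tropical_algClosed (n : ℕ) (hn : 1 ≤ n) (c : ℕ → WithBot ℝ) (hc : c n ≠ ⊥) :
    ∃ a : WithBot ℝ, (⊥ : WithBot ℝ) ∈ evalPoly Tadd Tmul ⊥ 0 n c a := by
  cases hc0 : c 0 with
  | bot => exact ⟨⊥, bot_mem_evalPoly_T_at_bot hn hc0⟩
  | coe c₀ =>
    obtain ⟨r, hr⟩ := exists_real_bot_mem_evalPoly_T hn hc hc0
    exact ⟨r, hr⟩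
end

section
/- The tropical complex hyperfield TC does not satisfy the multiplicity bound: the degree-2 polynomial p = X² ⊞ X ⊞ 1 over TC has at least three distinct roots, namely -1, i, and -i. -/
open Set
open scoped Classical

/-! In `TC`, `0 ∈ 1 ⊞ (-1)`, so `a` is a root of `X² ⊞ X ⊞ 1` as soon as `-1 ∈ a ⊞ a²`.
For `a = -1` this sum is `(-1) ⊞ 1`, the closed unit disc, which contains `-1`. For `a = ±i`
we have `a² = -1`, of the same modulus as `a`, and `-1` is an endpoint of the arc `±i ⊞ (-1)`. -/

lemma TCadd_zero_right (z : ℂ) : TCadd z 0 = {z} := by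
  by_cases hz : z = 0
  · ext c
    simp [TCadd, hz]
  · simp [TCadd, hz, norm_pos_iff.mpr hz]

lemma zero_mem_TCadd_neg (z : ℂ) : 0 ∈ TCadd z (-z) := by
  simp [TCadd]

lemma mem_TCadd_left_of_norm_eq {z w : ℂ} (h : ‖z‖ = ‖w‖) : z ∈ TCadd z w := by
  by_cases hw : w = -z
  · simp [TCadd, hw]
  · have hz : z ≠ 0 := by
      rintro rfl
      exact hw (by simpa using h.symm)
    simp only [TCadd, hw, h, lt_irrefl, if_false]
    refine ⟨1, zero_le_one, le_rfl, ?_⟩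
    simp [← h, hz]

lemma mem_TCadd_right_of_norm_eq {z w : ℂ} (h : ‖z‖ = ‖w‖) : w ∈ TCadd z w := by
  by_cases hw : w = -z
  · simp [TCadd, hw]
  · have hw₀ : w ≠ 0 := by
      rintro rfl
      exact hw (by simpa using h)
    simp only [TCadd, hw, h, lt_irrefl, if_false]
    refine ⟨0, le_rfl, zero_le_one, ?_⟩
    simp [hw₀]

lemma zero_mem_evalPoly_ones_two {a : ℂ} (h : -1 ∈ TCadd a (a * a)) :
    (0 : ℂ) ∈ evalPoly TCadd (· * ·) 0 1 2 (fun _ => 1) a := by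
  simp only [evalPoly, List.range_succ, List.range_zero, List.nil_append, List.cons_append,
    List.map_cons, List.map_nil, hsum, hpow, mem_iUnion, mem_singleton_iff, exists_prop,
    exists_eq_left, one_mul, mul_one, TCadd_zero_right]
  exact ⟨-1, h, zero_mem_TCadd_neg 1⟩

/-- `TC` does not satisfy the multiplicity bound: the degree-2
polynomial `X² ⊞ X ⊞ 1` has (at least) three distinct roots `-1`, `i`, `-i`. -/
theorem TC_fails_multiplicity_bound :
    ({-1, Complex.I, -Complex.I} : Finset ℂ).card = 3 ∧
    ∀ a ∈ ({-1, Complex.I, -Complex.I} : Finset ℂ),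
      (0 : ℂ) ∈ evalPoly TCadd (· * ·) 0 1 2 (fun _ => 1) a := by
  constructor
  · refine Finset.card_eq_three.mpr ⟨_, _, _, ?_, ?_, ?_, rfl⟩ <;> norm_num [Complex.ext_iff]
  simp only [Finset.mem_insert, Finset.mem_singleton]
  rintro a (rfl | rfl | rfl) <;> apply zero_mem_evalPoly_ones_two
  · simpa using mem_TCadd_left_of_norm_eq (z := -1) (w := 1) (by simp)
  · simpa using mem_TCadd_right_of_norm_eq (z := Complex.I) (w := -1) (by simp)
  · simpa using mem_TCadd_right_of_norm_eq (z := -Complex.I) (w := -1) (by simp)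
end

section
/- Let K be a field, H a hyperfield satisfying the multiplicity bound, and f: K → H a hyperfield homomorphism (viewing K as a hyperfield with singleton addition). If p ∈ K[X] splits into linear factors over K, then V(f_*(p)) ⊆ f(V(p)): every root of the push-forward f_*(p) over H lifts through f to a root of p in K. -/
open Set
open scoped Classical

/-!
Suppose a root `b` of `f_*(p)` had no preimage among the roots of `p`. Over a hyperfield a root
splits off a linear factor, so `b` has multiplicity at least one. Pushing forward a factorisation
`p = (X - a₁) ⋯ (X - aₖ) q` coefficientwise yields `f_*(p) ∈ (X ⊞ -f(a₁)) ⊙ ⋯ ⊙ f_*(q)`, so every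
`y ∈ f(V(p))` has multiplicity at least `#(f⁻¹(y) ∩ V(p))`, counted with multiplicity. Since `p`
splits, these fibres already account for `deg p`, and together with `b` the multiplicities of
`f_*(p)` add up to more than its degree, contradicting the multiplicity bound.
-/

open Polynomial

section Hsum

variable {H : Type*} {add : H → H → Set H} {zero : H}

theorem mem_hsum_cons {x t : H} {l : List H} :
    x ∈ hsum add zero (t :: l) ↔ ∃ s ∈ hsum add zero l, x ∈ add t s := by
  simp [hsum]

/-- `s i` is a hypersum of the terms of index at least `i`. -/
theorem exists_chain_of_mem_hsum_range' (t : ℕ → H) (m : ℕ) :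
    ∀ k x, x ∈ hsum add zero ((List.range' k m).map t) →
      ∃ s : ℕ → H, s k = x ∧ (∀ i, k + m ≤ i → s i = zero) ∧
        ∀ i, k ≤ i → i < k + m → s i ∈ add (t i) (s (i + 1)) := by
  induction m with
  | zero =>
    intro k x hx
    exact ⟨fun _ => zero, (Set.mem_singleton_iff.mp hx).symm, fun _ _ => rfl, fun i _ _ => by omega⟩
  | succ m ih =>
    intro k x hx
    rw [List.range'_succ, List.map_cons, mem_hsum_cons] at hx
    obtain ⟨y, hy, hxy⟩ := hx
    obtain ⟨s, hsk, hsz, hs⟩ := ih (k + 1) y hy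
    refine ⟨Function.update s k x, by simp, fun i hi => ?_, fun i hki hi => ?_⟩
    · rw [Function.update_of_ne (by omega)]
      exact hsz i (by omega)
    · rw [Function.update_of_ne (show i + 1 ≠ k by omega)]
      rcases hki.eq_or_lt with rfl | hki
      · simpa [hsk] using hxy
      · rw [Function.update_of_ne (by omega)]
        exact hs i hki (by omega)

end Hsum

namespace IsHyperfield

variable {H : Type*} {add : H → H → Set H} {mul : H → H → H} {neg : H → H} {zero one : H}
variable (h : IsHyperfield add mul neg zero one)
include h

theorem hmul_zero (x : H) : mul x zero = zero := by
  rw [h.hmul_comm]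
  exact h.zero_hmul x

theorem hmul_one (x : H) : mul x one = x := by
  rw [h.hmul_comm]
  exact h.one_hmul x

theorem hadd_zero (x : H) : add x zero = {x} := by
  rw [h.hadd_comm]
  exact h.zero_hadd x

theorem hmul_left_comm (x y z : H) : mul x (mul y z) = mul y (mul x z) := by
  rw [← h.hmul_assoc, h.hmul_comm x y, h.hmul_assoc]

theorem hneg_zero : neg zero = zero :=
  (h.hneg_unique zero zero (by rw [h.zero_hadd]; rfl)).symm

theorem mul_mem_add (a : H) {x y z : H} (hx : x ∈ add y z) :
    mul a x ∈ add (mul a y) (mul a z) := by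
  rw [← h.hdistrib]
  exact ⟨x, hx, rfl⟩

theorem mem_add_neg_of_mem_add {x y z : H} (hx : x ∈ add y z) : y ∈ add x (neg z) := by
  apply h.reversible
  rwa [h.hadd_comm]

theorem hneg_eq_hneg_one_hmul (x : H) : neg x = mul (neg one) x := by
  have hx : zero ∈ add x (mul x (neg one)) := by
    simpa only [h.hmul_zero, h.hmul_one] using h.mul_mem_add x (h.hneg_add one)
  rw [← h.hneg_unique x _ hx, h.hmul_comm]

theorem hneg_hmul (x y : H) : mul (neg x) y = neg (mul x y) := by
  rw [h.hneg_eq_hneg_one_hmul x, h.hneg_eq_hneg_one_hmul (mul x y), h.hmul_assoc]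

theorem hmul_hneg (x y : H) : mul x (neg y) = neg (mul x y) := by
  rw [h.hmul_comm, h.hneg_hmul, h.hmul_comm]

theorem hpow_mul_hpow {x y : H} (hxy : mul x y = one) (i : ℕ) :
    mul (hpow mul one x i) (hpow mul one y i) = one := by
  induction i with
  | zero => exact h.hmul_one one
  | succ i ih =>
    change mul (mul x (hpow mul one x i)) (mul y (hpow mul one y i)) = one
    rw [h.hmul_assoc, h.hmul_left_comm (hpow mul one x i), ← h.hmul_assoc, hxy, h.one_hmul, ih]

theorem hsum_eq_singleton_zero {l : List H} (hl : ∀ x ∈ l, x = zero) :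
    hsum add zero l = {zero} := by
  induction l with
  | nil => rfl
  | cons a l ih =>
    ext x
    rw [mem_hsum_cons, ih fun x hx => hl x (List.mem_cons_of_mem a hx),
      hl a List.mem_cons_self]
    simp [h.zero_hadd]

theorem evalPoly_zero (n : ℕ) (c : ℕ → H) : evalPoly add mul zero one n c zero = {c 0} := by
  ext x
  have htail : ∀ y ∈ (List.range n).map fun i => mul (c (i + 1)) (hpow mul one zero (i + 1)),
      y = zero := by
    simp only [List.mem_map]
    rintro y ⟨i, -, rfl⟩
    exact (congrArg _ (h.zero_hmul _)).trans (h.hmul_zero _)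
  rw [evalPoly, List.range_succ_eq_map, List.map_cons, List.map_map, mem_hsum_cons]
  simp only [Function.comp_def, h.hsum_eq_singleton_zero htail]
  simp [h.hadd_zero, hpow, h.hmul_one]

theorem exists_chain_of_mem_evalPoly {n : ℕ} {c : ℕ → H} {b x : H}
    (hc : ∀ i, n < i → c i = zero) (hx : x ∈ evalPoly add mul zero one n c b) :
    ∃ s : ℕ → H, s 0 = x ∧ (∀ i, n < i → s i = zero) ∧
      ∀ i, s i ∈ add (mul (c i) (hpow mul one b i)) (s (i + 1)) := by
  rw [evalPoly, List.range_eq_range'] at hx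
  obtain ⟨s, hs0, hsz, hs⟩ := exists_chain_of_mem_hsum_range' _ (n + 1) 0 x hx
  refine ⟨s, hs0, fun i hi => hsz i (by omega), fun i => ?_⟩
  by_cases hi : i < n + 1
  · exact hs i (Nat.zero_le i) (by omega)
  · rw [hsz i (by omega), hsz (i + 1) (by omega), hc i (by omega), h.zero_hmul, h.hadd_zero]
    rfl

theorem linFactor_zero {c : ℕ → H} (hc0 : c 0 = zero) :
    LinFactor add mul zero neg zero c fun i => c (i + 1) := by
  intro i
  rw [h.hneg_zero, h.zero_hmul, h.hadd_zero]
  rcases i with _ | i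
  · exact hc0
  · rfl

/-- Dividing the partial sums `s i` of `Σ cᵢ bⁱ = 0` by `bⁱ` gives the quotient by `X - b`. -/
theorem linFactor_of_chain {c s : ℕ → H} {b binv : H} (hb : mul b binv = one)
    (hs0 : s 0 = zero) (hs : ∀ i, s i ∈ add (mul (c i) (hpow mul one b i)) (s (i + 1))) :
    LinFactor add mul zero neg b c fun i => mul (hpow mul one binv (i + 1)) (s (i + 1)) := by
  intro i
  have hleft : mul (hpow mul one binv i) (s i) =
      if i = 0 then zero else mul (hpow mul one binv (i - 1 + 1)) (s (i - 1 + 1)) := by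
    rcases i with _ | i
    · rw [if_pos rfl, hs0, h.hmul_zero]
    · rfl
  have hright : mul (hpow mul one binv i) (neg (s (i + 1))) =
      mul (neg b) (mul (hpow mul one binv (i + 1)) (s (i + 1))) := by
    change _ = mul (neg b) (mul (mul binv (hpow mul one binv i)) (s (i + 1)))
    rw [h.hneg_hmul, h.hmul_assoc, ← h.hmul_assoc b, hb, h.one_hmul, h.hmul_hneg]
  have hc : mul (hpow mul one binv i) (mul (c i) (hpow mul one b i)) = c i := by
    rw [h.hmul_left_comm, h.hpow_mul_hpow (by rwa [h.hmul_comm]), h.hmul_one]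
  have hmem := h.mul_mem_add (hpow mul one binv i) (h.mem_add_neg_of_mem_add (hs i))
  rwa [hc, hleft, hright] at hmem

theorem exists_linFactor_of_root {n : ℕ} {c : ℕ → H} {b : H} (hc : ∀ i, n < i → c i = zero)
    (hb : zero ∈ evalPoly add mul zero one n c b) :
    ∃ d : ℕ → H, (∀ i, n ≤ i → d i = zero) ∧ LinFactor add mul zero neg b c d := by
  obtain rfl | hb0 := eq_or_ne b zero
  · rw [h.evalPoly_zero] at hb
    exact ⟨fun i => c (i + 1), fun i hi => hc _ (by omega), h.linFactor_zero hb.symm⟩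
  · obtain ⟨binv, hbinv⟩ := h.exists_inv b hb0
    obtain ⟨s, hs0, hsz, hs⟩ := h.exists_chain_of_mem_evalPoly hc hb
    refine ⟨_, fun i hi => ?_, h.linFactor_of_chain hbinv hs0 hs⟩
    rw [hsz (i + 1) (by omega), h.hmul_zero]

theorem coeff_eq_of_linFactor {n : ℕ} {a : H} {c d : ℕ → H}
    (hlin : LinFactor add mul zero neg a c d) (hd : ∀ i, n ≤ i → d i = zero) :
    c n = if n = 0 then zero else d (n - 1) := by
  have hn := hlin n
  rwa [hd n le_rfl, h.hmul_zero, h.hadd_zero] at hn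

theorem le_of_multGe {a : H} {k : ℕ} : ∀ {n : ℕ} {c : ℕ → H}, c n ≠ zero →
    MultGe add mul zero one neg a n c k → k ≤ n := by
  induction k with
  | zero => exact fun _ _ => Nat.zero_le _
  | succ k ih =>
    rintro n c hcn ⟨-, d, hd, hlin, hk⟩
    have hcoeff := h.coeff_eq_of_linFactor hlin hd
    split_ifs at hcoeff with hn
    · exact absurd hcoeff hcn
    · have := ih (hcoeff ▸ hcn) hk
      omega

theorem le_hmult {a : H} {n k : ℕ} {c : ℕ → H} (hcn : c n ≠ zero)
    (hk : MultGe add mul zero one neg a n c k) : k ≤ hmult add mul zero one neg n c a :=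
  le_csSup ⟨n, fun _ hm => h.le_of_multGe hcn hm⟩ hk

theorem one_le_hmult_of_root {n : ℕ} {c : ℕ → H} {b : H} (hc : ∀ i, n < i → c i = zero)
    (hcn : c n ≠ zero) (hb : zero ∈ evalPoly add mul zero one n c b) :
    1 ≤ hmult add mul zero one neg n c b := by
  obtain ⟨d, hd, hlin⟩ := h.exists_linFactor_of_root hc hb
  exact h.le_hmult hcn ⟨hb, d, hd, hlin, trivial⟩

end IsHyperfield

namespace IsHyperfieldHom

variable {H : Type*} {add : H → H → Set H} {mul : H → H → H} {neg : H → H} {zero one : H}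
variable {K : Type*} [CommRing K] {f : K → H}
variable (hf : IsHyperfieldHom (fun x y : K => ({x + y} : Set K)) (· * ·) 0 1 add mul zero one f)
include hf

theorem map_add_mem (x y : K) : f (x + y) ∈ add (f x) (f y) :=
  hf.map_add x y ⟨x + y, rfl, rfl⟩

theorem map_neg (h : IsHyperfield add mul neg zero one) (x : K) : f (-x) = neg (f x) := by
  apply h.hneg_unique
  simpa [hf.map_zero] using hf.map_add_mem x (-x)

theorem map_ne_zero_of_isUnit (h : IsHyperfield add mul neg zero one) {x : K} (hx : IsUnit x) :
    f x ≠ zero := by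
  intro hfx
  have h1 : f (x * hx.unit⁻¹) = one := by rw [hx.mul_val_inv, hf.map_one]
  rw [hf.map_mul, hfx, h.zero_hmul] at h1
  exact h.zero_ne_one h1

theorem map_pow (x : K) (i : ℕ) : f (x ^ i) = hpow mul one (f x) i := by
  induction i with
  | zero => rw [pow_zero, hf.map_one]; rfl
  | succ i ih => rw [pow_succ', hf.map_mul, ih]; rfl

theorem map_list_sum_mem_hsum (l : List K) : f l.sum ∈ hsum add zero (l.map f) := by
  induction l with
  | nil => exact hf.map_zero
  | cons t l ih => exact mem_hsum_cons.mpr ⟨_, ih, hf.map_add_mem t l.sum⟩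

theorem map_eval_mem_evalPoly (p : K[X]) (a : K) :
    f (p.eval a) ∈ evalPoly add mul zero one p.natDegree (fun i => f (p.coeff i)) (f a) := by
  have hcoeffs : ((List.range (p.natDegree + 1)).map fun i => p.coeff i * a ^ i).map f =
      (List.range (p.natDegree + 1)).map fun i => mul (f (p.coeff i)) (hpow mul one (f a) i) := by
    simp only [List.map_map, Function.comp_def, hf.map_mul, hf.map_pow]
  rw [evalPoly, ← hcoeffs, eval_eq_sum_range]
  exact hf.map_list_sum_mem_hsum _

theorem linFactor_map (h : IsHyperfield add mul neg zero one) (a : K) (q : K[X]) :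
    LinFactor add mul zero neg (f a) (fun i => f (((X - C a) * q).coeff i))
      fun i => f (q.coeff i) := by
  intro i
  dsimp only
  have hcoeff : ((X - C a) * q).coeff i =
      (if i = 0 then 0 else q.coeff (i - 1)) + -a * q.coeff i := by
    rw [sub_mul, coeff_sub, coeff_C_mul]
    rcases i with _ | i
    · simp
    · rw [coeff_X_mul]
      simp [sub_eq_add_neg]
  have hif : f (if i = 0 then 0 else q.coeff (i - 1)) =
      if i = 0 then zero else f (q.coeff (i - 1)) := by
    split_ifs
    exacts [hf.map_zero, rfl]
  rw [hcoeff, ← hif, ← hf.map_neg h, ← hf.map_mul]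
  exact hf.map_add_mem _ _

variable [IsDomain K]

theorem multGe_map (h : IsHyperfield add mul neg zero one) (b : H) (s : Multiset K) :
    ∀ p : K[X], p ≠ 0 → (∀ a ∈ s, f a = b) → (s.map fun a => X - C a).prod ∣ p →
      MultGe add mul zero one neg b p.natDegree (fun i => f (p.coeff i)) (Multiset.card s) := by
  induction s using Multiset.induction with
  | empty => exact fun _ _ _ _ => trivial
  | cons a s ih =>
    intro p hp hfs hdvd
    rw [Multiset.map_cons, Multiset.prod_cons] at hdvd
    obtain ⟨q, rfl⟩ := (dvd_mul_right _ _).trans hdvd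
    have hq : q ≠ 0 := right_ne_zero_of_mul hp
    have hdeg : ((X - C a) * q).natDegree = q.natDegree + 1 := by
      rw [natDegree_mul (X_sub_C_ne_zero a) hq, natDegree_X_sub_C, add_comm]
    have hfa : f a = b := hfs a (Multiset.mem_cons_self a s)
    subst hfa
    rw [Multiset.card_cons, MultGe]
    refine ⟨?_, fun i => f (q.coeff i), fun i hi => ?_, hf.linFactor_map h a q, ?_⟩
    · have hroot := hf.map_eval_mem_evalPoly ((X - C a) * q) a
      rwa [eval_mul, eval_sub, eval_X, eval_C, sub_self, zero_mul, hf.map_zero] at hroot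
    · change f (q.coeff i) = zero
      rw [coeff_eq_zero_of_natDegree_lt (by omega), hf.map_zero]
    · rw [hdeg, Nat.add_sub_cancel]
      exact ih q hq (fun x hx => hfs x (Multiset.mem_cons_of_mem hx))
        ((mul_dvd_mul_iff_left (X_sub_C_ne_zero a)).mp hdvd)

theorem count_map_roots_le_hmult (h : IsHyperfield add mul neg zero one) {p : K[X]} (hp : p ≠ 0)
    (hlead : f p.leadingCoeff ≠ zero) (y : H) : (p.roots.map f).count y ≤
      hmult add mul zero one neg p.natDegree (fun i => f (p.coeff i)) y := by
  rw [Multiset.count_map]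
  refine h.le_hmult hlead ?_
  refine hf.multGe_map h y _ p hp (fun a ha => (Multiset.mem_filter.mp ha).2.symm) ?_
  exact (Multiset.prod_X_sub_C_dvd_iff_le_roots hp _).mpr (Multiset.filter_le _ _)

theorem natDegree_le_sum_hmult (h : IsHyperfield add mul neg zero one) {p : K[X]} (hp : p ≠ 0)
    (hlead : f p.leadingCoeff ≠ zero) (hsplit : p.Splits) :
    p.natDegree ≤ ∑ y ∈ (p.roots.map f).toFinset,
      hmult add mul zero one neg p.natDegree (fun i => f (p.coeff i)) y :=
  calc p.natDegree = ∑ y ∈ (p.roots.map f).toFinset, (p.roots.map f).count y := by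
        rw [Multiset.toFinset_sum_count_eq, Multiset.card_map, splits_iff_card_roots.mp hsplit]
    _ ≤ _ := Finset.sum_le_sum fun y _ => hf.count_map_roots_le_hmult h hp hlead y

end IsHyperfieldHom

/-- let `K` be a field, `H` a hyperfield satisfying the
multiplicity bound, and `f : K → H` a hyperfield homomorphism. If `p ∈ K[X]`
splits into linear factors, then every root of `f_*(p)` lifts to a root of `p`. -/
theorem lift_root_of_splits {K : Type*} [Field K] {H : Type*}
    (add : H → H → Set H) (mul : H → H → H) (neg : H → H) (zero one : H)
    (h : IsHyperfield add mul neg zero one)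
    (hbound : MultBound add mul zero one neg)
    (f : K → H)
    (hf : IsHyperfieldHom (fun x y : K => ({x + y} : Set K)) (· * ·) 0 1
      add mul zero one f)
    (p : Polynomial K) (hp : p ≠ 0) (hsplit : p.Splits)
    (b : H)
    (hb : zero ∈ evalPoly add mul zero one p.natDegree (fun i => f (p.coeff i)) b) :
    ∃ a : K, f a = b ∧ p.eval a = 0 := by
  by_contra! hlift
  have hlead : f p.leadingCoeff ≠ zero :=
    hf.map_ne_zero_of_isUnit h (isUnit_iff_ne_zero.mpr (leadingCoeff_ne_zero.mpr hp))
  have hb_image : b ∉ (p.roots.map f).toFinset := by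
    simp only [Multiset.mem_toFinset, Multiset.mem_map, mem_roots hp, IsRoot.def]
    rintro ⟨a, ha, rfl⟩
    exact hlift a rfl ha
  have hb_mult := h.one_le_hmult_of_root
    (fun i hi => by rw [coeff_eq_zero_of_natDegree_lt hi, hf.map_zero]) hlead hb
  have hbound_b :=
    hbound p.natDegree (fun i => f (p.coeff i)) hlead (insert b (p.roots.map f).toFinset)
  rw [Finset.sum_insert hb_image] at hbound_b
  have hfibres := hf.natDegree_le_sum_hmult h hp hlead hsplit
  omega
end
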